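/- arXiv:0708.3326 — 3 statements merged into one kernel-verified Lean document; each statement's English description precedes it below -/
import Mathlib

section
/- The polynomial C_m := B_m/λ(m) ∈ ℤ[T₁,T₂] is primitive, i.e. the gcd of its coefficients is 1. Equivalently, for m a power of a prime ℓ, the gcd of the binomial coefficients C(m,i)/ℓ for 0 < i < m together generates the unit ideal; and for m not a prime power, gcd of the C(m,i), 0 < i < m, is 1. -/
noncomputable section

variable {A : Type*} [CommRing A]

/-- Substitution of a family of (multivariate) power series into a multivariate power
series, defined coefficientwise via truncation.  It computes the honest substitution
whenever each `a s` has zero constant coefficient. -/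
def psubst {σ τ : Type*} [Fintype σ] [DecidableEq σ] (F : MvPowerSeries σ A)
    (a : σ → MvPowerSeries τ A) : MvPowerSeries τ A :=
  fun e => MvPowerSeries.coeff e
    (MvPolynomial.eval₂ (MvPowerSeries.C (σ := τ) (R := A)) a
      (MvPowerSeries.trunc A
        (Finsupp.equivFunOnFinite.symm fun _ => (e.sum fun _ k => k) + 1) F))

/-- `subst2 F f g` is `F(f, g)`. -/
def subst2 {τ : Type*} (F : MvPowerSeries (Fin 2) A) (f g : MvPowerSeries τ A) :
    MvPowerSeries τ A :=
  psubst F ![f, g]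

/-- `subst1 f G` is `f(G)`, substitution of a multivariate power series into a
one-variable power series. -/
def subst1 {τ : Type*} (f : PowerSeries A) (G : MvPowerSeries τ A) : MvPowerSeries τ A :=
  psubst f (fun _ => G)

/-- A (commutative, one-dimensional) formal group law over `A`. -/
structure IsFormalGroupLaw (F : MvPowerSeries (Fin 2) A) : Prop where
  id_left : subst2 F PowerSeries.X 0 = (PowerSeries.X : PowerSeries A)
  id_right : subst2 F 0 PowerSeries.X = (PowerSeries.X : PowerSeries A)
  assoc : subst2 F (subst2 F (MvPowerSeries.X 0) (MvPowerSeries.X 1))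
        (MvPowerSeries.X (2 : Fin 3))
      = subst2 F (MvPowerSeries.X 0) (subst2 F (MvPowerSeries.X 1) (MvPowerSeries.X 2))
  comm : subst2 F (MvPowerSeries.X 1) (MvPowerSeries.X (0 : Fin 2)) = F

/-- The `m`-series `[m]_F` of a formal group law: `[1]_F = T`, `[m+1]_F = F([m]_F, T)`. -/
def mulSeries (F : MvPowerSeries (Fin 2) A) : ℕ → PowerSeries A
  | 0 => 0
  | 1 => PowerSeries.X
  | (n+2) => subst2 F (mulSeries F (n+1)) PowerSeries.X

/-- The defect `∂f = f ∘ F − G ∘ (f × f)` measuring the failure of `f` to be a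
homomorphism of formal group laws `F → G`. -/
def fglDelta (F G : MvPowerSeries (Fin 2) A) (f : PowerSeries A) :
    MvPowerSeries (Fin 2) A :=
  subst1 f F - subst2 G (subst1 f (MvPowerSeries.X 0)) (subst1 f (MvPowerSeries.X 1))

/-- `f` is a homomorphism of formal group laws `F → G`. -/
def IsFGLHom (F G : MvPowerSeries (Fin 2) A) (f : PowerSeries A) : Prop :=
  PowerSeries.constantCoeff f = 0 ∧ fglDelta F G f = 0

/-- Lazard's polynomial `B_m = (T₁+T₂)^m − T₁^m − T₂^m`. -/
def Bpoly (A : Type*) [CommRing A] (m : ℕ) : MvPolynomial (Fin 2) A :=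
  (MvPolynomial.X 0 + MvPolynomial.X 1) ^ m - MvPolynomial.X 0 ^ m - MvPolynomial.X 1 ^ m

/-- `λ(m)`: the prime `ℓ` if `m` is a power of `ℓ`, and `1` otherwise. -/
def lambdaFun (m : ℕ) : ℕ := if IsPrimePow m then m.minFac else 1

/-- Lazard's polynomial `C_m = B_m / λ(m)`. -/
def Cpoly (A : Type*) [CommRing A] (m : ℕ) : MvPolynomial (Fin 2) A :=
  ∑ i ∈ Finset.Ioo 0 m, MvPolynomial.monomial
    (Finsupp.single 0 i + Finsupp.single 1 (m - i)) ((m.choose i / lambdaFun m : ℕ) : A)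

/-- The degree-`m` homogeneous part of a two-variable power series, as a polynomial. -/
def degPart (m : ℕ) (Φ : MvPowerSeries (Fin 2) A) : MvPolynomial (Fin 2) A :=
  ∑ i ∈ Finset.range (m + 1), MvPolynomial.monomial
    (Finsupp.single 0 i + Finsupp.single 1 (m - i))
    (MvPowerSeries.coeff (Finsupp.single 0 i + Finsupp.single 1 (m - i)) Φ)

/-- The symmetric 2-cocycle condition for a two-variable polynomial. -/
def IsSymmCocycle (P : MvPolynomial (Fin 2) A) : Prop :=
  MvPolynomial.rename (Equiv.swap (0 : Fin 2) 1) P = P ∧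
  MvPolynomial.aeval ![(MvPolynomial.X 1 : MvPolynomial (Fin 3) A), MvPolynomial.X 2] P
    - MvPolynomial.aeval ![(MvPolynomial.X 0 + MvPolynomial.X 1 : MvPolynomial (Fin 3) A),
        MvPolynomial.X 2] P
    + MvPolynomial.aeval ![(MvPolynomial.X 0 : MvPolynomial (Fin 3) A),
        MvPolynomial.X 1 + MvPolynomial.X 2] P
    - MvPolynomial.aeval ![(MvPolynomial.X 0 : MvPolynomial (Fin 3) A), MvPolynomial.X 1] P = 0

/-!
The coefficient of `T₁^i T₂^(m-i)` in `B_m` is `choose m i`, so an integer dividing every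
coefficient of `C_m` multiplies `λ(m)` into a divisor of `gcd_{0<i<m} choose m i`. By Lucas'
theorem this gcd is exactly `λ(m)`: for `m` not a power of a prime `p`, `p` does not divide
`choose m (p ^ v_p(m))`; for `m = ℓ^k` every `choose m i` is divisible by `ℓ`, but
`choose (ℓ^k) (ℓ^(k-1))` is not divisible by `ℓ^2`.
-/

open Finset

theorem Nat.gcd_choose_of_isPrimePow {m : ℕ} (h : IsPrimePow m) :
    (Icc 1 (m - 1)).gcd m.choose = m.minFac := by
  have hg0 : (Icc 1 (m - 1)).gcd m.choose ≠ 0 :=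
    Finset.gcd_ne_zero_iff.mpr ⟨1, mem_Icc.mpr ⟨le_rfl, by have := h.two_le; omega⟩,
      by rw [Nat.choose_one_right]; exact h.ne_zero⟩
  obtain ⟨k, hk⟩ : ∃ k, (Icc 1 (m - 1)).gcd m.choose = m.minFac ^ k :=
    ⟨_, Nat.eq_prime_pow_of_unique_prime_dvd hg0 fun hd hdg => by
      rw [← Finset.mem_singleton, ← Choose.primeFactors_gcd_choose_of_isPrimePow h]
      exact Nat.mem_primeFactors.mpr ⟨hd, hdg, hg0⟩⟩
  have hℓ : m.minFac.Prime := Nat.minFac_prime h.ne_one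
  have hk1 : 1 ≤ k := by
    have := Choose.minFac_dvd_gcd_choose_of_isPrimePow h
    rw [hk] at this
    nth_rw 1 [← pow_one m.minFac] at this
    rwa [Nat.pow_dvd_pow_iff_le_right hℓ.one_lt] at this
  have hk2 : k < 2 := by
    have := Choose.minFac_sq_ndvd_gcd_choose_of_isPrimePow h
    rwa [hk, Nat.pow_dvd_pow_iff_le_right hℓ.one_lt, not_le] at this
  rw [hk, show k = 1 by omega, pow_one]

theorem Nat.gcd_choose_of_not_isPrimePow {m : ℕ} (hm : 2 ≤ m) (h : ¬ IsPrimePow m) :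
    (Icc 1 (m - 1)).gcd m.choose = 1 := by
  refine Nat.eq_one_iff_not_exists_prime_dvd.mpr fun p hp hpg => h ?_
  have : Fact p.Prime := ⟨hp⟩
  have hm_eq := Choose.eq_pow_multiplicity_of_choose_modEq_zero_nat (by omega) fun i hi =>
    Nat.modEq_zero_iff_dvd.mpr (Finset.dvd_gcd_iff.mp hpg i hi)
  refine ⟨p, multiplicity p m, hp.prime, Nat.pos_of_ne_zero fun h0 => ?_, hm_eq.symm⟩
  rw [h0, pow_zero] at hm_eq
  omega

theorem lambdaFun_pos (m : ℕ) : 0 < lambdaFun m := by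
  unfold lambdaFun
  split_ifs
  exacts [Nat.minFac_pos m, Nat.one_pos]

theorem gcd_choose_eq_lambdaFun {m : ℕ} (hm : 2 ≤ m) :
    (Icc 1 (m - 1)).gcd m.choose = lambdaFun m := by
  unfold lambdaFun
  split_ifs with h
  · exact Nat.gcd_choose_of_isPrimePow h
  · exact Nat.gcd_choose_of_not_isPrimePow hm h

theorem coeff_Bpoly {A : Type*} [CommRing A] {m i : ℕ} (hi : i ∈ Icc 1 (m - 1)) :
    MvPolynomial.coeff (Finsupp.single 0 i + Finsupp.single 1 (m - i)) (Bpoly A m) =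
      m.choose i := by
  classical
  set d : Fin 2 →₀ ℕ := Finsupp.single 0 i + Finsupp.single 1 (m - i)
  have hd0 : d 0 = i := by simp [d]
  have hd1 : d 1 = m - i := by simp [d]
  rw [mem_Icc] at hi
  have h0 : Finsupp.single 0 m ≠ d := fun h => by
    have := congr($h 1)
    rw [Finsupp.single_eq_of_ne (by decide), hd1] at this
    omega
  have h1 : Finsupp.single 1 m ≠ d := fun h => by
    have := congr($h 0)
    rw [Finsupp.single_eq_of_ne (by decide), hd0] at this
    omega
  rw [Bpoly, MvPolynomial.coeff_sub, MvPolynomial.coeff_sub, MvPolynomial.coeff_add_pow,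
    MvPolynomial.coeff_X_pow, MvPolynomial.coeff_X_pow, if_neg h0, if_neg h1, hd0, hd1,
    if_pos (HasAntidiagonal.mem_antidiagonal.mpr (by omega)), sub_zero, sub_zero]

theorem statement3 (m : ℕ) (hm : 2 ≤ m) (C : MvPolynomial (Fin 2) ℤ)
    (hC : (lambdaFun m : ℤ) • C = Bpoly ℤ m) :
    ∀ n : ℤ, (∀ d : Fin 2 →₀ ℕ, n ∣ MvPolynomial.coeff d C) → IsUnit n := by
  intro n hn
  have hdvd : ∀ i ∈ Icc 1 (m - 1), lambdaFun m * n.natAbs ∣ m.choose i := by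
    intro i hi
    have hcoeff := congr(MvPolynomial.coeff (Finsupp.single 0 i + Finsupp.single 1 (m - i)) $hC)
    rw [MvPolynomial.coeff_smul, zsmul_eq_mul, coeff_Bpoly hi] at hcoeff
    rw [← Int.natCast_dvd_natCast, ← hcoeff]
    push_cast
    exact mul_dvd_mul_left _ ((abs_dvd n _).mpr (hn _))
  have hgcd := Finset.dvd_gcd hdvd
  rw [gcd_choose_eq_lambdaFun hm] at hgcd
  exact Int.isUnit_iff_natAbs_eq.mpr <| Nat.dvd_one.mp <|
    Nat.dvd_of_mul_dvd_mul_left (lambdaFun_pos m) (by rwa [mul_one])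
end
end

section
/- Let A be a commutative ring and let F, G be formal group laws over A with F ≡ G mod (T₁,T₂)^m and degree-m homogeneous difference equal to a·C_m for a ∈ A. Then for every k ≥ 1, the k-series satisfy [k]_F(T) ≡ [k]_G(T) + ((k^m − k)/λ(m))·a·T^m modulo (T)^{m+1}. -/
/-! Put `f = [k]_F` and `g = [k]_G`, so that
`[k+1]_F - [k+1]_G = (F(f,T) - F(g,T)) + (F - G)(g,T)`.
Modulo `T^(m+1)` the first summand is `f - g`, because `F = T₁ + T₂ + (degree ≥ 2)` and
`f ≡ g mod T^m`; the second is `a • C_m(g,T) ≡ a • C_m(k,1) • T^m`, because `F - G` starts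
with `a • C_m` and `g ≡ k • T mod T^2`. So the coefficient of `T^m` in `[k]_F - [k]_G` grows
by `a • C_m(k,1)` from `k` to `k + 1`, and by the binomial theorem so does `(k^m - k)/λ(m)`. -/

open Finset

theorem pow_succ_dvd_pow_sub_pow {R : Type*} [CommRing R] {x f g : R} {m i : ℕ}
    (hfg : x ^ m ∣ f - g) (hf : x ∣ f) (hg : x ∣ g) (hi : 2 ≤ i) :
    x ^ (m + 1) ∣ f ^ i - g ^ i := by
  rw [← geom_sum₂_mul, pow_succ']
  refine mul_dvd_mul (dvd_sum fun j hj => ?_) hfg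
  rcases Nat.eq_zero_or_pos j with rfl | hj0
  · exact dvd_mul_of_dvd_right (dvd_pow hg (by simp at hj; omega)) _
  · exact dvd_mul_of_dvd_left (dvd_pow hf hj0.ne') _

theorem pow_succ_dvd_pow_sub_pow_mul_pow {R : Type*} [CommRing R] {x f g h : R} {m i j : ℕ}
    (hfg : x ^ m ∣ f - g) (hf : x ∣ f) (hg : x ∣ g) (hh : x ∣ h) (hij : (i, j) ≠ (1, 0)) :
    x ^ (m + 1) ∣ (f ^ i - g ^ i) * h ^ j := by
  rcases Nat.lt_or_ge i 2 with hi | hi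
  · interval_cases i
    · simp
    · have hj : j ≠ 0 := by rintro rfl; exact hij rfl
      rw [pow_one, pow_one, pow_succ]
      exact mul_dvd_mul hfg (dvd_pow hh hj)
  · exact dvd_mul_of_dvd_left (pow_succ_dvd_pow_sub_pow hfg hf hg hi) _

section Substitution

variable {A σ : Type*} [CommRing A] [Fintype σ]

theorem PowerSeries.exists_prod_pow_eq_X_pow_mul {a : σ → PowerSeries A}
    (ha : ∀ s, constantCoeff (a s) = 0) (d : σ →₀ ℕ) :
    ∃ b : PowerSeries A, constantCoeff b = ∏ s, coeff 1 (a s) ^ d s ∧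
      ∏ s, a s ^ d s = X ^ d.degree * b := by
  choose b hb using fun s => X_dvd_iff.mpr (ha s)
  refine ⟨∏ s, b s ^ d s, ?_, ?_⟩
  · simp [hb, coeff_succ_X_mul]
  · simp_rw [hb, mul_pow, prod_mul_distrib, prod_pow_eq_pow_sum, Finsupp.degree_eq_sum]

theorem PowerSeries.coeff_prod_pow_of_lt_degree {a : σ → PowerSeries A}
    (ha : ∀ s, constantCoeff (a s) = 0) {d : σ →₀ ℕ} {n : ℕ} (hn : n < d.degree) :
    coeff n (∏ s, a s ^ d s) = 0 := by
  obtain ⟨b, -, hb⟩ := exists_prod_pow_eq_X_pow_mul ha d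
  exact X_pow_dvd_iff.mp (hb ▸ dvd_mul_right _ _) n hn

theorem PowerSeries.coeff_degree_prod_pow {a : σ → PowerSeries A}
    (ha : ∀ s, constantCoeff (a s) = 0) (d : σ →₀ ℕ) :
    coeff d.degree (∏ s, a s ^ d s) = ∏ s, coeff 1 (a s) ^ d s := by
  obtain ⟨b, hb0, hb⟩ := exists_prod_pow_eq_X_pow_mul ha d
  rw [hb, coeff_X_pow_mul', if_pos le_rfl, Nat.sub_self, coeff_zero_eq_constantCoeff_apply, hb0]

variable [DecidableEq σ]

theorem coeff_psubst_eq_coeff_eval₂_trunc {τ : Type*} (Φ : MvPowerSeries σ A)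
    (a : σ → MvPowerSeries τ A) (e : τ →₀ ℕ) :
    MvPowerSeries.coeff e (psubst Φ a) =
      MvPowerSeries.coeff e (MvPolynomial.eval₂ MvPowerSeries.C a
        (MvPowerSeries.trunc A
          (Finsupp.equivFunOnFinite.symm fun _ => (e.sum fun _ k => k) + 1) Φ)) := by
  rw [MvPowerSeries.coeff_apply, psubst]

theorem psubst_sub {τ : Type*} (Φ Ψ : MvPowerSeries σ A) (a : σ → MvPowerSeries τ A) :
    psubst (Φ - Ψ) a = psubst Φ a - psubst Ψ a := by
  ext e
  simp only [map_sub, coeff_psubst_eq_coeff_eval₂_trunc, MvPolynomial.eval₂_sub]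

-- For empty `σ`, `psubst` truncates below `0` and so returns `0`.
variable [Nonempty σ]

theorem coeff_psubst (Φ : MvPowerSeries σ A) {a : σ → PowerSeries A}
    (ha : ∀ s, PowerSeries.constantCoeff (a s) = 0) (n : ℕ) {S : Finset (σ →₀ ℕ)}
    (hS : ∀ d : σ →₀ ℕ, d.degree ≤ n → d ∈ S) :
    PowerSeries.coeff n (psubst Φ a)
      = ∑ d ∈ S, MvPowerSeries.coeff d Φ * PowerSeries.coeff n (∏ s, a s ^ d s) := by
  set b : σ →₀ ℕ := Finsupp.equivFunOnFinite.symm fun _ => n + 1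
  set t : (σ →₀ ℕ) → A := fun d => MvPowerSeries.coeff d Φ * PowerSeries.coeff n (∏ s, a s ^ d s)
  have ht : ∀ d, n < d.degree → t d = 0 := fun d hd => by
    simp only [t, PowerSeries.coeff_prod_pow_of_lt_degree ha hd, mul_zero]
  have hb : ∀ d : σ →₀ ℕ, d.degree ≤ n → d < b := fun d hd =>
    Finsupp.lt_def.mpr ⟨fun s => by simpa [b] using (d.le_degree s).trans (hd.trans n.le_succ),
      Classical.arbitrary σ, by simpa [b] using (d.le_degree _).trans_lt (Nat.lt_succ_of_le hd)⟩
  have htrunc : ∀ d, MvPolynomial.coeff d (MvPowerSeries.trunc A b Φ)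
      * PowerSeries.coeff n (∏ s, a s ^ d s) = t d := by
    intro d
    rw [MvPowerSeries.coeff_trunc]
    split_ifs with h
    · rfl
    · rw [zero_mul, ht d]
      by_contra! hd
      exact h (hb d hd)
  calc PowerSeries.coeff n (psubst Φ a)
      = ∑ d ∈ (MvPowerSeries.trunc A b Φ).support, t d := by
        change MvPowerSeries.coeff (Finsupp.single () n) _ = _
        rw [coeff_psubst_eq_coeff_eval₂_trunc, Finsupp.sum_single_index rfl,
          MvPolynomial.eval₂_eq', map_sum]
        simp_rw [MvPowerSeries.coeff_C_mul]
        exact sum_congr rfl fun d _ => htrunc d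
    _ = ∑ᶠ d, t d := by
        refine (finsum_eq_sum_of_support_subset t fun d hd => ?_).symm
        rw [Finset.mem_coe, MvPolynomial.mem_support_iff]
        rintro h0
        exact hd (by rw [← htrunc, h0, zero_mul])
    _ = ∑ d ∈ S, t d := by
        refine finsum_eq_sum_of_support_subset t fun d hd => hS d ?_
        by_contra! hlt
        exact hd (ht d hlt)

theorem coeff_psubst_eq_eval {Φ : MvPowerSeries σ A} {P : MvPolynomial σ A} {n : ℕ}
    (hP : P.IsHomogeneous n)
    (hΦ : ∀ d : σ →₀ ℕ, d.degree ≤ n → MvPowerSeries.coeff d Φ = P.coeff d)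
    {a : σ → PowerSeries A} (ha : ∀ s, PowerSeries.constantCoeff (a s) = 0) :
    PowerSeries.coeff n (psubst Φ a)
      = MvPolynomial.eval (fun s => PowerSeries.coeff 1 (a s)) P := by
  have hS : ∀ d : σ →₀ ℕ, d.degree ≤ n → d ∈ (Finsupp.finite_of_degree_le n).toFinset := by simp
  rw [coeff_psubst Φ ha n hS, MvPolynomial.eval_eq']
  symm
  refine sum_subset (fun d hd => hS d (hP.degree_eq_sum_deg_support hd).ge) ?_ |>.trans ?_
  · intro d _ hd
    rw [MvPolynomial.notMem_support_iff.mp hd, zero_mul]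
  · refine sum_congr rfl fun d hd => ?_
    rw [hΦ d (by simpa using hd)]
    rcases (show d.degree ≤ n by simpa using hd).lt_or_eq with hlt | rfl
    · rw [hP.coeff_eq_zero hlt.ne, zero_mul, zero_mul]
    · rw [PowerSeries.coeff_degree_prod_pow ha]

theorem coeff_psubst_single_X (Φ : MvPowerSeries σ A) (s : σ) (n : ℕ) :
    PowerSeries.coeff n (psubst Φ (Pi.single s PowerSeries.X))
      = MvPowerSeries.coeff (Finsupp.single s n) Φ := by
  set e : σ → PowerSeries A := Pi.single s PowerSeries.X
  have ha : ∀ i, PowerSeries.constantCoeff (e i) = 0 := by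
    intro i
    by_cases h : i = s <;> simp [e, h]
  have hprod : ∀ d : σ →₀ ℕ, (∀ i ≠ s, d i = 0) → ∏ i, e i ^ d i = PowerSeries.X ^ d s :=
    fun d h => by rw [prod_eq_single s (fun i _ hi => by rw [h i hi, pow_zero]) (by simp)]; simp [e]
  rw [coeff_psubst Φ ha n (S := (Finsupp.finite_of_degree_le n).toFinset) (by simp),
    sum_eq_single (Finsupp.single s n)]
  · rw [hprod _ fun i hi => Finsupp.single_eq_of_ne hi]
    simp
  · intro d _ hd
    suffices PowerSeries.coeff n (∏ i, e i ^ d i) = 0 by rw [this, mul_zero]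
    by_cases h : ∀ i ≠ s, d i = 0
    · rw [hprod d h, PowerSeries.coeff_X_pow, if_neg]
      rintro rfl
      refine hd (Finsupp.ext fun i => ?_)
      by_cases hi : i = s
      · rw [hi, Finsupp.single_eq_same]
      · rw [h i hi, Finsupp.single_eq_of_ne hi]
    · push Not at h
      obtain ⟨i, hi, hdi⟩ := h
      rw [prod_eq_zero (mem_univ i) (by simp [e, hi, hdi]), map_zero]
  · simp

end Substitution

section TwoVariables

variable {A : Type*} [CommRing A]

theorem Finsupp.degree_fin_two (d : Fin 2 →₀ ℕ) : d.degree = d 0 + d 1 := by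
  rw [Finsupp.degree_eq_sum, Fin.sum_univ_two]

theorem Finsupp.eq_single_zero_add_single_one (d : Fin 2 →₀ ℕ) :
    d = Finsupp.single 0 (d 0) + Finsupp.single 1 (d 1) := by
  ext i
  fin_cases i <;> simp

theorem subst2_sub {τ : Type*} (Φ Ψ : MvPowerSeries (Fin 2) A) (f g : MvPowerSeries τ A) :
    subst2 (Φ - Ψ) f g = subst2 Φ f g - subst2 Ψ f g :=
  psubst_sub Φ Ψ ![f, g]

theorem coeff_subst2 (Φ : MvPowerSeries (Fin 2) A) {f g : PowerSeries A}
    (hf : PowerSeries.constantCoeff f = 0) (hg : PowerSeries.constantCoeff g = 0) (n : ℕ)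
    {S : Finset (Fin 2 →₀ ℕ)} (hS : ∀ d : Fin 2 →₀ ℕ, d.degree ≤ n → d ∈ S) :
    PowerSeries.coeff n (subst2 Φ f g)
      = ∑ d ∈ S, MvPowerSeries.coeff d Φ * PowerSeries.coeff n (f ^ d 0 * g ^ d 1) := by
  rw [subst2, coeff_psubst Φ (Fin.forall_fin_two.mpr ⟨hf, hg⟩) n hS]
  simp [Fin.prod_univ_two]

theorem coeff_subst2_eq_eval {Φ : MvPowerSeries (Fin 2) A} {P : MvPolynomial (Fin 2) A} {n : ℕ}
    (hP : P.IsHomogeneous n)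
    (hΦ : ∀ d : Fin 2 →₀ ℕ, d.degree ≤ n → MvPowerSeries.coeff d Φ = P.coeff d)
    {f g : PowerSeries A} (hf : PowerSeries.constantCoeff f = 0)
    (hg : PowerSeries.constantCoeff g = 0) :
    PowerSeries.coeff n (subst2 Φ f g)
      = MvPolynomial.eval ![PowerSeries.coeff 1 f, PowerSeries.coeff 1 g] P := by
  rw [subst2, coeff_psubst_eq_eval hP hΦ (Fin.forall_fin_two.mpr ⟨hf, hg⟩)]
  congr
  ext s
  fin_cases s <;> rfl

theorem coeff_subst2_sub_subst2 (Φ : MvPowerSeries (Fin 2) A) {f g h : PowerSeries A}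
    (hf : PowerSeries.constantCoeff f = 0) (hg : PowerSeries.constantCoeff g = 0)
    (hh : PowerSeries.constantCoeff h = 0) {m n : ℕ} (hfg : PowerSeries.X ^ m ∣ f - g)
    (hn : n ≤ m) :
    PowerSeries.coeff n (subst2 Φ f h) - PowerSeries.coeff n (subst2 Φ g h)
      = MvPowerSeries.coeff (Finsupp.single 0 1) Φ * PowerSeries.coeff n (f - g) := by
  set S := insert (Finsupp.single 0 1) (Finsupp.finite_of_degree_le (σ := Fin 2) n).toFinset
  have hS : ∀ d : Fin 2 →₀ ℕ, d.degree ≤ n → d ∈ S := fun d hd => mem_insert_of_mem (by simpa)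
  rw [coeff_subst2 Φ hf hh n hS, coeff_subst2 Φ hg hh n hS, ← sum_sub_distrib,
    sum_eq_single_of_mem _ (mem_insert_self _ _)]
  · simp [mul_sub]
  · intro d _ hd
    have hij : (d 0, d 1) ≠ (1, 0) := fun h01 => hd <| by
      obtain ⟨h0, h1⟩ := Prod.mk.inj h01
      rw [d.eq_single_zero_add_single_one, h0, h1, Finsupp.single_zero, add_zero]
    have hdvd := pow_succ_dvd_pow_sub_pow_mul_pow hfg (PowerSeries.X_dvd_iff.mpr hf)
      (PowerSeries.X_dvd_iff.mpr hg) (PowerSeries.X_dvd_iff.mpr hh) hij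
    rw [← mul_sub, ← map_sub, ← sub_mul, PowerSeries.X_pow_dvd_iff.mp hdvd n (by omega), mul_zero]

end TwoVariables

namespace IsFormalGroupLaw

variable {A : Type*} [CommRing A] {F : MvPowerSeries (Fin 2) A}

theorem coeff_single (hF : IsFormalGroupLaw F) (s : Fin 2) (n : ℕ) :
    MvPowerSeries.coeff (Finsupp.single s n) F = PowerSeries.coeff n PowerSeries.X := by
  revert s
  refine Fin.forall_fin_two.mpr ⟨?_, ?_⟩ <;> rw [← coeff_psubst_single_X]
  · rw [show (Pi.single 0 PowerSeries.X : Fin 2 → PowerSeries A) = ![PowerSeries.X, 0] by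
      ext i; fin_cases i <;> simp]
    exact congrArg _ hF.id_left
  · rw [show (Pi.single 1 PowerSeries.X : Fin 2 → PowerSeries A) = ![0, PowerSeries.X] by
      ext i; fin_cases i <;> simp]
    exact congrArg _ hF.id_right

theorem constantCoeff_eq_zero (hF : IsFormalGroupLaw F) : MvPowerSeries.constantCoeff F = 0 := by
  simpa using hF.coeff_single 0 0

theorem coeff_eq_coeff_X_add_X (hF : IsFormalGroupLaw F) {d : Fin 2 →₀ ℕ} (hd : d.degree ≤ 1) :
    MvPowerSeries.coeff d F = MvPolynomial.coeff d (MvPolynomial.X 0 + MvPolynomial.X 1) := by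
  rw [Finsupp.degree_fin_two] at hd
  rw [d.eq_single_zero_add_single_one]
  obtain ⟨h0, h1⟩ | ⟨h0, h1⟩ | ⟨h0, h1⟩ : (d 0 = 0 ∧ d 1 = 0) ∨ (d 0 = 1 ∧ d 1 = 0) ∨
      (d 0 = 0 ∧ d 1 = 1) := by omega
  all_goals rw [h0, h1]
  · simpa using hF.constantCoeff_eq_zero
  · simpa [MvPolynomial.coeff_X, Finsupp.single_eq_single_iff] using hF.coeff_single 0 1
  · simpa [MvPolynomial.coeff_X, Finsupp.single_eq_single_iff] using hF.coeff_single 1 1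

end IsFormalGroupLaw

section MulSeries

variable {A : Type*} [CommRing A] {F : MvPowerSeries (Fin 2) A}

theorem mulSeries_succ (hF : IsFormalGroupLaw F) :
    ∀ k, mulSeries F (k + 1) = subst2 F (mulSeries F k) PowerSeries.X
  | 0 => hF.id_right.symm
  | _ + 1 => rfl

theorem constantCoeff_mulSeries (hF : IsFormalGroupLaw F) (k : ℕ) :
    PowerSeries.constantCoeff (mulSeries F k) = 0 := by
  induction k with
  | zero => rfl
  | succ k ih =>
    rw [mulSeries_succ hF, ← PowerSeries.coeff_zero_eq_constantCoeff_apply,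
      coeff_subst2_eq_eval (MvPolynomial.isHomogeneous_zero _ _ 0) _ ih
        PowerSeries.constantCoeff_X, map_zero]
    intro d hd
    rw [nonpos_iff_eq_zero, Finsupp.degree_eq_zero_iff] at hd
    simpa [hd] using hF.constantCoeff_eq_zero

theorem coeff_one_mulSeries (hF : IsFormalGroupLaw F) (k : ℕ) :
    PowerSeries.coeff 1 (mulSeries F k) = k := by
  induction k with
  | zero => simp [mulSeries]
  | succ k ih =>
    rw [mulSeries_succ hF, coeff_subst2_eq_eval
      ((MvPolynomial.isHomogeneous_X _ 0).add (MvPolynomial.isHomogeneous_X _ 1))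
      (fun d hd => hF.coeff_eq_coeff_X_add_X hd) (constantCoeff_mulSeries hF k)
      PowerSeries.constantCoeff_X]
    simp [ih]

end MulSeries

section Lazard

theorem lambdaFun_dvd_choose {m i : ℕ} (hi : i ∈ Ioo 0 m) : lambdaFun m ∣ m.choose i := by
  unfold lambdaFun
  split_ifs with h
  · obtain ⟨p, t, hp, ht, rfl⟩ := h
    have hp : p.Prime := Nat.prime_iff.mpr hp
    rw [Nat.pow_minFac ht.ne', hp.minFac_eq]
    exact hp.dvd_choose_pow (mem_Ioo.mp hi).1.ne' (mem_Ioo.mp hi).2.ne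
  · exact one_dvd _

theorem lambdaFun_dvd_pow_sub_self (m k : ℕ) : lambdaFun m ∣ k ^ m - k := by
  unfold lambdaFun
  split_ifs with h
  · obtain ⟨p, t, hp, ht, rfl⟩ := h
    have hp : p.Prime := Nat.prime_iff.mpr hp
    have := Fact.mk hp
    rw [Nat.pow_minFac ht.ne', hp.minFac_eq, ← ZMod.natCast_eq_zero_iff,
      Nat.cast_sub (Nat.le_self_pow (pow_ne_zero t hp.ne_zero) k), Nat.cast_pow,
      ZMod.pow_card_pow, sub_self]
  · exact one_dvd _

theorem add_one_pow_sub_add_one {m : ℕ} (hm : m ≠ 0) (k : ℕ) :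
    (k + 1) ^ m - (k + 1) = (k ^ m - k) + ∑ i ∈ Ioo 0 m, m.choose i * k ^ i := by
  have hbin : (k + 1) ^ m = k ^ m + ∑ i ∈ Ioo 0 m, m.choose i * k ^ i + 1 := by
    rw [add_pow, sum_range_succ, range_eq_Ico,
      ← add_sum_erase _ _ (mem_Ico.mpr ⟨le_rfl, Nat.pos_of_ne_zero hm⟩), Ico_erase_left]
    simp only [one_pow, mul_one, Nat.choose_self, Nat.choose_zero_right, pow_zero, Nat.cast_id,
      one_mul, mul_comm (k ^ _)]
    ring
  have := Nat.le_self_pow hm k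
  omega

theorem add_one_pow_sub_add_one_div_lambdaFun {m : ℕ} (hm : m ≠ 0) (k : ℕ) :
    ((k + 1) ^ m - (k + 1)) / lambdaFun m
      = (k ^ m - k) / lambdaFun m + ∑ i ∈ Ioo 0 m, m.choose i / lambdaFun m * k ^ i := by
  have hdvd : ∀ i ∈ Ioo 0 m, lambdaFun m ∣ m.choose i * k ^ i :=
    fun i hi => (lambdaFun_dvd_choose hi).mul_right _
  rw [add_one_pow_sub_add_one hm, Nat.add_div_of_dvd_right (lambdaFun_dvd_pow_sub_self m k),
    Nat.sum_div hdvd]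
  exact congrArg _ <| sum_congr rfl fun i hi =>
    (Nat.div_mul_right_comm (lambdaFun_dvd_choose hi) _).symm

variable (A : Type*) [CommRing A]

theorem isHomogeneous_Cpoly (m : ℕ) : (Cpoly A m).IsHomogeneous m :=
  MvPolynomial.IsHomogeneous.sum _ _ _ fun i hi =>
    MvPolynomial.isHomogeneous_monomial _ <| by
      rw [map_add, Finsupp.degree_single, Finsupp.degree_single]
      exact Nat.add_sub_cancel' (mem_Ioo.mp hi).2.le

theorem eval_Cpoly (m : ℕ) (x : A) :
    MvPolynomial.eval ![x, 1] (Cpoly A m)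
      = ∑ i ∈ Ioo 0 m, ((m.choose i / lambdaFun m : ℕ) : A) * x ^ i := by
  simp [Cpoly, MvPolynomial.eval_monomial, Finsupp.prod_add_index', pow_add]

end Lazard

section Comparison

variable {A : Type*} [CommRing A] {F G : MvPowerSeries (Fin 2) A} {m : ℕ} {a : A}

theorem coeff_subst2_sub_of_lt
    (hlow : ∀ d : Fin 2 →₀ ℕ, d 0 + d 1 < m → MvPowerSeries.coeff d F = MvPowerSeries.coeff d G)
    {f g : PowerSeries A} (hf : PowerSeries.constantCoeff f = 0)
    (hg : PowerSeries.constantCoeff g = 0) {n : ℕ} (hn : n < m) :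
    PowerSeries.coeff n (subst2 (F - G) f g) = 0 := by
  rw [coeff_subst2_eq_eval (MvPolynomial.isHomogeneous_zero _ _ n) _ hf hg, map_zero]
  intro d hd
  rw [map_sub, hlow d (by rw [← d.degree_fin_two]; omega), sub_self, MvPolynomial.coeff_zero]

theorem coeff_subst2_sub_of_eq
    (hlow : ∀ d : Fin 2 →₀ ℕ, d 0 + d 1 < m → MvPowerSeries.coeff d F = MvPowerSeries.coeff d G)
    (hdeg : ∀ d : Fin 2 →₀ ℕ, d 0 + d 1 = m →
      MvPowerSeries.coeff d F = MvPowerSeries.coeff d G + a * MvPolynomial.coeff d (Cpoly A m))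
    {f g : PowerSeries A} (hf : PowerSeries.constantCoeff f = 0)
    (hg : PowerSeries.constantCoeff g = 0) :
    PowerSeries.coeff m (subst2 (F - G) f g)
      = a * MvPolynomial.eval ![PowerSeries.coeff 1 f, PowerSeries.coeff 1 g] (Cpoly A m) := by
  rw [coeff_subst2_eq_eval ((isHomogeneous_Cpoly A m).C_mul a) _ hf hg, map_mul,
    MvPolynomial.eval_C]
  intro d hd
  rw [map_sub, MvPolynomial.coeff_C_mul]
  rcases hd.lt_or_eq with hlt | heq
  · rw [hlow d (by rwa [← d.degree_fin_two]), sub_self,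
      (isHomogeneous_Cpoly A m).coeff_eq_zero hlt.ne, mul_zero]
  · rw [hdeg d (by rwa [← d.degree_fin_two]), add_sub_cancel_left]

theorem coeff_mulSeries_sub_mulSeries (hF : IsFormalGroupLaw F) (hG : IsFormalGroupLaw G)
    (hm : m ≠ 0)
    (hlow : ∀ d : Fin 2 →₀ ℕ, d 0 + d 1 < m → MvPowerSeries.coeff d F = MvPowerSeries.coeff d G)
    (hdeg : ∀ d : Fin 2 →₀ ℕ, d 0 + d 1 = m →
      MvPowerSeries.coeff d F = MvPowerSeries.coeff d G + a * MvPolynomial.coeff d (Cpoly A m))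
    (k : ℕ) {n : ℕ} (hn : n ≤ m) :
    PowerSeries.coeff n (mulSeries F k - mulSeries G k)
      = if n = m then (((k ^ m - k) / lambdaFun m : ℕ) : A) * a else 0 := by
  induction k generalizing n with
  | zero => simp [mulSeries, zero_pow hm]
  | succ k ih =>
    have hf := constantCoeff_mulSeries hF k
    have hg := constantCoeff_mulSeries hG k
    have hfg : PowerSeries.X ^ m ∣ mulSeries F k - mulSeries G k :=
      PowerSeries.X_pow_dvd_iff.mpr fun j hj => by rw [ih hj.le, if_neg hj.ne]
    rw [mulSeries_succ hF, mulSeries_succ hG, map_sub,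
      ← sub_add_sub_cancel _ (PowerSeries.coeff n (subst2 F (mulSeries G k) PowerSeries.X)),
      coeff_subst2_sub_subst2 F hf hg PowerSeries.constantCoeff_X hfg hn, ← map_sub,
      ← subst2_sub, hF.coeff_single, PowerSeries.coeff_X, if_pos rfl, one_mul, ih hn]
    rcases hn.lt_or_eq with hlt | rfl
    · rw [coeff_subst2_sub_of_lt hlow hg PowerSeries.constantCoeff_X hlt, if_neg hlt.ne,
        if_neg hlt.ne, add_zero]
    · rw [coeff_subst2_sub_of_eq hlow hdeg hg PowerSeries.constantCoeff_X, if_pos rfl, if_pos rfl,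
        coeff_one_mulSeries hG, PowerSeries.coeff_X, if_pos rfl, eval_Cpoly,
        add_one_pow_sub_add_one_div_lambdaFun hm]
      push_cast
      ring

end Comparison

theorem statement10_general (A : Type*) [CommRing A] (F G : MvPowerSeries (Fin 2) A)
    (hF : IsFormalGroupLaw F) (hG : IsFormalGroupLaw G) (m : ℕ) (hm : 2 ≤ m) (a : A)
    (hlow : ∀ d : Fin 2 →₀ ℕ, d 0 + d 1 < m →
      MvPowerSeries.coeff d F = MvPowerSeries.coeff d G)
    (hdeg : ∀ d : Fin 2 →₀ ℕ, d 0 + d 1 = m →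
      MvPowerSeries.coeff d F
        = MvPowerSeries.coeff d G + a * MvPolynomial.coeff d (Cpoly A m))
    (k : ℕ) :
    (∀ j < m, PowerSeries.coeff j (mulSeries F k) = PowerSeries.coeff j (mulSeries G k)) ∧
    PowerSeries.coeff m (mulSeries F k)
      = PowerSeries.coeff m (mulSeries G k) + (((k ^ m - k) / lambdaFun m : ℕ) : A) * a := by
  have hm0 : m ≠ 0 := by omega
  refine ⟨fun j hj => ?_, ?_⟩
  · simpa [hj.ne, sub_eq_zero] using coeff_mulSeries_sub_mulSeries hF hG hm0 hlow hdeg k hj.le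
  · simpa [sub_eq_iff_eq_add'] using coeff_mulSeries_sub_mulSeries hF hG hm0 hlow hdeg k le_rfl

theorem statement10 (A : Type*) [CommRing A] (F G : MvPowerSeries (Fin 2) A)
    (hF : IsFormalGroupLaw F) (hG : IsFormalGroupLaw G) (m : ℕ) (hm : 2 ≤ m) (a : A)
    (hlow : ∀ d : Fin 2 →₀ ℕ, d 0 + d 1 < m →
      MvPowerSeries.coeff d F = MvPowerSeries.coeff d G)
    (hdeg : ∀ d : Fin 2 →₀ ℕ, d 0 + d 1 = m →
      MvPowerSeries.coeff d F
        = MvPowerSeries.coeff d G + a * MvPolynomial.coeff d (Cpoly A m))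
    (k : ℕ) (hk : 1 ≤ k) :
    (∀ j < m, PowerSeries.coeff j (mulSeries F k) = PowerSeries.coeff j (mulSeries G k)) ∧
    PowerSeries.coeff m (mulSeries F k)
      = PowerSeries.coeff m (mulSeries G k) + (((k ^ m - k) / lambdaFun m : ℕ) : A) * a :=
  statement10_general A F G hF hG m hm a hlow hdeg k
end

section
/- Let A be a commutative ring, X = Spec B an affine scheme over S = Spec A equipped with an A-algebra augmentation σ^#: B → A splitting the structure map, with augmentation ideal I = ker(B → A) satisfying I^{n+1} = 0. Suppose I/I² is a free A-module of rank 1 and the natural maps (I/I²)^{⊗i} → I^i/I^{i+1} are isomorphisms for 1 ≤ i ≤ n. Then B is isomorphic as an augmented A-algebra to A[T]/(T)^{n+1}: for any t ∈ I lifting a generator of I/I², the A-algebra map A[T]/(T^{n+1}) → B sending T ↦ t is an isomorphism. -/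
/-!
Filter `B` by the powers of `I`. The hypotheses say exactly that `a ↦ a tⁱ` induces an
isomorphism `A ≅ Iⁱ/Iⁱ⁺¹` for every `i ≤ n` (for `i = 0` via the augmentation), i.e. that
`T ↦ t` is an isomorphism on associated graded pieces. Injectivity follows by looking at the
lowest-order coefficient of a polynomial killed by `t`; surjectivity by successive
approximation, which terminates because `Iⁿ⁺¹ = 0`.
-/

open Polynomial

section

variable {A B : Type*} [CommRing A] [CommRing B] [Algebra A B] {I : Ideal B} {t : B} {n : ℕ}

theorem AddSubgroup.eq_top_of_forall_exists_sub_mem_pow (S : AddSubgroup B)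
    (hnil : I ^ (n + 1) = ⊥) (happrox : ∀ i ≤ n, ∀ x ∈ I ^ i, ∃ s ∈ S, x - s ∈ I ^ (i + 1)) :
    S = ⊤ := by
  suffices h : ∀ k, ∀ x ∈ I ^ (n + 1 - k), x ∈ S by
    exact eq_top_iff.2 fun x _ ↦ h (n + 1) x (by simp)
  intro k
  induction k with
  | zero =>
    intro x hx
    rw [Nat.sub_zero, hnil, Ideal.mem_bot] at hx
    exact hx ▸ S.zero_mem
  | succ k ih =>
    intro x hx
    by_cases hk : n + 1 ≤ k
    · exact ih x (by rwa [show n + 1 - k = n + 1 - (k + 1) by omega])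
    obtain ⟨s, hs, hxs⟩ := happrox (n + 1 - (k + 1)) (by omega) x hx
    have hxs' : x - s ∈ S := ih _ (by rwa [show n + 1 - (k + 1) + 1 = n + 1 - k by omega] at hxs)
    simpa using S.add_mem hxs' hs

theorem Polynomial.aeval_sub_algebraMap_coeff_mul_pow_mem {p : A[X]} {i : ℕ} (htI : t ∈ I)
    (hp : ∀ j < i, p.coeff j = 0) :
    aeval t p - algebraMap A B (p.coeff i) * t ^ i ∈ I ^ (i + 1) := by
  obtain ⟨q, hq⟩ : X ^ (i + 1) ∣ p - C (p.coeff i) * X ^ i := by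
    refine X_pow_dvd_iff.2 fun j hj ↦ ?_
    rcases Nat.lt_or_eq_of_le (Nat.lt_succ_iff.1 hj) with hji | rfl
    · simp [hp j hji, hji.ne]
    · simp
  have h := congrArg (aeval t) hq
  simp only [map_sub, map_mul, map_pow, aeval_C, aeval_X] at h
  exact h ▸ Ideal.mul_mem_right _ _ (Ideal.pow_mem_pow htI _)

theorem Polynomial.X_pow_dvd_of_aeval_mem_pow {p : A[X]} (htI : t ∈ I)
    (hindep : ∀ i ≤ n, ∀ a : A, algebraMap A B a * t ^ i ∈ I ^ (i + 1) → a = 0)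
    (hp : aeval t p ∈ I ^ (n + 1)) : X ^ (n + 1) ∣ p := by
  refine X_pow_dvd_iff.2 fun i hi ↦ ?_
  induction i using Nat.strong_induction_on with
  | _ i ih =>
    refine hindep i (by omega) _ ?_
    have hlow := aeval_sub_algebraMap_coeff_mul_pow_mem (p := p) htI fun j hj ↦ ih j hj (by omega)
    have hp' : aeval t p ∈ I ^ (i + 1) := Ideal.pow_le_pow_right (by omega) hp
    simpa using sub_mem hp' hlow

theorem AdjoinRoot.liftAlgHom_X_pow_injective
    (ht : eval₂ (Algebra.ofId A B : A →+* B) t (X ^ (n + 1) : A[X]) = 0) (htI : t ∈ I)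
    (hindep : ∀ i ≤ n, ∀ a : A, algebraMap A B a * t ^ i ∈ I ^ (i + 1) → a = 0) :
    Function.Injective (liftAlgHom (X ^ (n + 1) : A[X]) (Algebra.ofId A B) t ht) := by
  refine (injective_iff_map_eq_zero _).2 fun x hx ↦ ?_
  obtain ⟨p, rfl⟩ := mk_surjective x
  rw [liftAlgHom_mk] at hx
  have hp : aeval t p = 0 := hx
  exact mk_eq_zero.2 (X_pow_dvd_of_aeval_mem_pow htI hindep (hp ▸ zero_mem _))

theorem AdjoinRoot.liftAlgHom_X_pow_surjective
    (ht : eval₂ (Algebra.ofId A B : A →+* B) t (X ^ (n + 1) : A[X]) = 0) (hnil : I ^ (n + 1) = ⊥)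
    (hspan : ∀ i ≤ n, ∀ x ∈ I ^ i, ∃ a : A, x - algebraMap A B a * t ^ i ∈ I ^ (i + 1)) :
    Function.Surjective (liftAlgHom (X ^ (n + 1) : A[X]) (Algebra.ofId A B) t ht) := by
  set f := liftAlgHom (X ^ (n + 1) : A[X]) (Algebra.ofId A B) t ht
  refine f.range_eq_top.1 (Subalgebra.toSubring_injective (Subring.toAddSubgroup_injective ?_))
  refine AddSubgroup.eq_top_of_forall_exists_sub_mem_pow _ hnil fun i hi x hx ↦ ?_
  obtain ⟨a, ha⟩ := hspan i hi x hx
  refine ⟨algebraMap A B a * t ^ i, ⟨algebraMap A _ a * root _ ^ i, ?_⟩, ha⟩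
  simp [f]

end

theorem statement13 {A B : Type*} [CommRing A] [CommRing B] [Algebra A B]
    (σ : B →ₐ[A] A) (n : ℕ) (I : Ideal B) (hI : I = RingHom.ker σ)
    (hnil : I ^ (n + 1) = ⊥) (t : B) (htI : t ∈ I) (ht0 : t ^ (n + 1) = 0)
    (hbasis : ∀ i, 1 ≤ i → i ≤ n →
      (∀ x ∈ I ^ i, ∃ a : A, x - algebraMap A B a * t ^ i ∈ I ^ (i + 1)) ∧
      (∀ a : A, algebraMap A B a * t ^ i ∈ I ^ (i + 1) → a = 0)) :
    Function.Bijective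
      (AdjoinRoot.liftAlgHom (Polynomial.X ^ (n + 1) : Polynomial A) (Algebra.ofId A B) t (by simp [ht0])) := by
  have hspan : ∀ i ≤ n, ∀ x ∈ I ^ i, ∃ a : A, x - algebraMap A B a * t ^ i ∈ I ^ (i + 1) := by
    rintro (_ | i) hi x hx
    · exact ⟨σ x, by simp [hI]⟩
    · exact (hbasis (i + 1) (by omega) hi).1 x hx
  have hindep : ∀ i ≤ n, ∀ a : A, algebraMap A B a * t ^ i ∈ I ^ (i + 1) → a = 0 := by
    rintro (_ | i) hi a ha
    · simpa [hI] using ha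
    · exact (hbasis (i + 1) (by omega) hi).2 a ha
  exact ⟨AdjoinRoot.liftAlgHom_X_pow_injective _ htI hindep,
    AdjoinRoot.liftAlgHom_X_pow_surjective _ hnil hspan⟩
end
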